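/- Trace bound for ridge variance: with the notation of the previous statement, tr(M) ≤ (1/n)·(1/(1−‖Δ‖)²)·(d_{2,λ} + √(d_{2,λ})·‖Δ‖_F), where d_{2,λ} := Σⱼ (λⱼ(Σ)/(λⱼ(Σ)+λ))² and ‖Δ‖_F is the Frobenius norm. -/

import Mathlib

open Matrix

noncomputable def matSpectralNorm {m : Type*} [Fintype m] [DecidableEq m]
    (A : Matrix m m ℝ) : ℝ := ‖Matrix.toEuclideanCLM (𝕜 := ℝ) A‖

namespace Matrix.PosSemidef

/-- The positive semidefinite square root (definition from the older Mathlib, since removed). -/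
noncomputable def sqrt {n : Type*} [Fintype n] [DecidableEq n]
    {A : Matrix n n ℝ} (hA : A.PosSemidef) : Matrix n n ℝ :=
  hA.1.eigenvectorUnitary.1 * diagonal ((↑) ∘ (√·) ∘ hA.1.eigenvalues) *
    (star hA.1.eigenvectorUnitary : Matrix n n ℝ)


open scoped MatrixOrder in
lemma sqrt_eq_CFC {n : Type*} [Fintype n] [DecidableEq n]
    {A : Matrix n n ℝ} (hA : A.PosSemidef) : hA.sqrt = CFC.sqrt A := by
  rw [CFC.sqrt_eq_real_sqrt A hA.nonneg, cfcₙ_eq_cfc, hA.1.cfc_eq, IsHermitian.cfc,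
    Unitary.conjStarAlgAut_apply]
  rfl

open scoped MatrixOrder in
lemma posSemidef_sqrt {n : Type*} [Fintype n] [DecidableEq n]
    {A : Matrix n n ℝ} (hA : A.PosSemidef) : hA.sqrt.PosSemidef := by
  rw [sqrt_eq_CFC]; exact (CFC.sqrt_nonneg A).posSemidef

open scoped MatrixOrder in
lemma sqrt_mul_self {n : Type*} [Fintype n] [DecidableEq n]
    {A : Matrix n n ℝ} (hA : A.PosSemidef) : hA.sqrt * hA.sqrt = A := by
  rw [sqrt_eq_CFC]; exact CFC.sqrt_mul_sqrt_self A hA.nonneg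

open scoped MatrixOrder in
lemma eq_sqrt_of_sq_eq {n : Type*} [Fintype n] [DecidableEq n]
    {B A : Matrix n n ℝ} (hB : B.PosSemidef) (hA : A.PosSemidef) (h : B ^ 2 = A) :
    B = hA.sqrt := by
  rw [sqrt_eq_CFC]; exact (CFC.sqrt_unique (by rw [← sq]; exact h) hB.nonneg).symm
end Matrix.PosSemidef

namespace Stmt10Aux

noncomputable def fro {d : ℕ} (X : Matrix (Fin d) (Fin d) ℝ) : ℝ :=
  Real.sqrt (∑ i, ∑ j, X i j ^ 2)

lemma fro_nonneg {d : ℕ} (X : Matrix (Fin d) (Fin d) ℝ) : 0 ≤ fro X := Real.sqrt_nonneg _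

lemma fro_transpose {d : ℕ} (X : Matrix (Fin d) (Fin d) ℝ) : fro Xᵀ = fro X := by
  unfold fro
  rw [Finset.sum_comm]
  simp [Matrix.transpose_apply]

lemma trace_mul_le_fro {d : ℕ} (X Y : Matrix (Fin d) (Fin d) ℝ) :
    (X * Y).trace ≤ fro X * fro Y := by
  have h : (X * Y).trace = ∑ p : Fin d × Fin d, X p.1 p.2 * Y p.2 p.1 := by
    rw [Matrix.trace, Fintype.sum_prod_type]
    simp [Matrix.diag, Matrix.mul_apply]
  rw [h]
  have := Real.sum_mul_le_sqrt_mul_sqrt Finset.univ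
    (fun p : Fin d × Fin d => X p.1 p.2) (fun p : Fin d × Fin d => Y p.2 p.1)
  refine this.trans_eq ?_
  congr 1
  · unfold fro; rw [Fintype.sum_prod_type]
  · unfold fro
    rw [Fintype.sum_prod_type, Finset.sum_comm]

lemma mulVec_sq_le {d : ℕ} (C : Matrix (Fin d) (Fin d) ℝ) (x : Fin d → ℝ) :
    ∑ i, (C *ᵥ x) i ^ 2 ≤ matSpectralNorm C ^ 2 * ∑ i, x i ^ 2 := by
  have key : ‖(Matrix.toEuclideanCLM (𝕜 := ℝ) C) ((WithLp.equiv _ _).symm x)‖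
      ≤ matSpectralNorm C * ‖((WithLp.equiv 2 (Fin d → ℝ)).symm x : EuclideanSpace ℝ (Fin d))‖ :=
    (Matrix.toEuclideanCLM (𝕜 := ℝ) C).le_opNorm _
  change ‖((WithLp.equiv 2 (Fin d → ℝ)).symm (Matrix.toLin' C x) : EuclideanSpace ℝ (Fin d))‖ ≤ _ at key
  have h1 : ‖((WithLp.equiv 2 (Fin d → ℝ)).symm (Matrix.toLin' C x) : EuclideanSpace ℝ (Fin d))‖
      = Real.sqrt (∑ i, (C *ᵥ x) i ^ 2) := by
    rw [EuclideanSpace.norm_eq]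
    simp [Matrix.toLin'_apply, Real.norm_eq_abs, sq_abs]
  have h2 : ‖((WithLp.equiv 2 (Fin d → ℝ)).symm x : EuclideanSpace ℝ (Fin d))‖
      = Real.sqrt (∑ i, x i ^ 2) := by
    rw [EuclideanSpace.norm_eq]
    simp [Real.norm_eq_abs, sq_abs]
  rw [h1, h2] at key
  have hnn : (0:ℝ) ≤ matSpectralNorm C := norm_nonneg _
  calc ∑ i, (C *ᵥ x) i ^ 2 = Real.sqrt (∑ i, (C *ᵥ x) i ^ 2) ^ 2 := by
        rw [Real.sq_sqrt]; positivity
    _ ≤ (matSpectralNorm C * Real.sqrt (∑ i, x i ^ 2)) ^ 2 := by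
        apply pow_le_pow_left₀ (Real.sqrt_nonneg _) key
    _ = matSpectralNorm C ^ 2 * ∑ i, x i ^ 2 := by
        rw [mul_pow, Real.sq_sqrt]; positivity

lemma fro_mul_le {d : ℕ} (C Y : Matrix (Fin d) (Fin d) ℝ) :
    fro (C * Y) ≤ matSpectralNorm C * fro Y := by
  have hnn : (0:ℝ) ≤ matSpectralNorm C := norm_nonneg _
  have key : ∑ i, ∑ j, (C * Y) i j ^ 2 ≤ matSpectralNorm C ^ 2 * ∑ i, ∑ j, Y i j ^ 2 := by
    rw [Finset.sum_comm, Finset.sum_comm (γ := Fin d) (f := fun i j => Y i j ^ 2)]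
    rw [Finset.mul_sum]
    apply Finset.sum_le_sum
    intro j _
    have := mulVec_sq_le C (fun k => Y k j)
    simpa [Matrix.mul_apply, Matrix.mulVec, dotProduct] using this
  unfold fro
  calc Real.sqrt (∑ i, ∑ j, (C * Y) i j ^ 2)
      ≤ Real.sqrt (matSpectralNorm C ^ 2 * ∑ i, ∑ j, Y i j ^ 2) := Real.sqrt_le_sqrt key
    _ = matSpectralNorm C * Real.sqrt (∑ i, ∑ j, Y i j ^ 2) := by
        rw [Real.sqrt_mul (by positivity), Real.sqrt_sq hnn]

lemma isUnit_one_add {d : ℕ} (Δ : Matrix (Fin d) (Fin d) ℝ) (hΔ : matSpectralNorm Δ < 1) :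
    IsUnit (1 + Δ) := by
  have h1 : ‖-(Matrix.toEuclideanCLM (𝕜 := ℝ) Δ)‖ < 1 := by rwa [norm_neg]
  have hu : IsUnit (1 + Matrix.toEuclideanCLM (𝕜 := ℝ) Δ) := by
    have := (Units.oneSub (-(Matrix.toEuclideanCLM (𝕜 := ℝ) Δ)) h1).isUnit
    simpa [Units.oneSub, sub_neg_eq_add] using this
  have hu2 := hu.map (Matrix.toEuclideanCLM (𝕜 := ℝ) (n := Fin d)).symm
  have heq : (Matrix.toEuclideanCLM (𝕜 := ℝ) (n := Fin d)).symm
      (1 + Matrix.toEuclideanCLM (𝕜 := ℝ) Δ) = 1 + Δ := by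
    rw [_root_.map_add, _root_.map_one, StarAlgEquiv.symm_apply_apply]
  rwa [heq] at hu2

lemma spectralNorm_inv_le {d : ℕ} (Δ : Matrix (Fin d) (Fin d) ℝ) (hΔ : matSpectralNorm Δ < 1) :
    matSpectralNorm (1 + Δ)⁻¹ ≤ (1 - matSpectralNorm Δ)⁻¹ := by
  have hu := isUnit_one_add Δ hΔ
  have hdet := (Matrix.isUnit_iff_isUnit_det _).mp hu
  have hmul' : (1 + Δ) * (1 + Δ)⁻¹ = 1 := Matrix.mul_nonsing_inv _ hdet
  set T := Matrix.toEuclideanCLM (𝕜 := ℝ) Δ with hT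
  set TC := Matrix.toEuclideanCLM (𝕜 := ℝ) (1 + Δ)⁻¹ with hTC
  have hcomp : (1 + T) * TC = 1 := by
    have h := congrArg (Matrix.toEuclideanCLM (𝕜 := ℝ)) hmul'
    rw [_root_.map_mul, _root_.map_one, _root_.map_add, _root_.map_one] at h
    exact h
  have hpos : 0 < 1 - matSpectralNorm Δ := by linarith
  apply ContinuousLinearMap.opNorm_le_bound _ (by positivity)
  intro x
  have happ : ((1 + T) * TC) x = x := by rw [hcomp]; rfl
  have h2 : ((1 + T) * TC) x = TC x + T (TC x) := by
    simp [ContinuousLinearMap.mul_apply]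
  have hx : ‖x‖ = ‖TC x + T (TC x)‖ := by rw [← h2, happ]
  have h3 : ‖TC x‖ - ‖T (TC x)‖ ≤ ‖TC x + T (TC x)‖ := by
    have := norm_sub_norm_le (TC x) (-(T (TC x)))
    simpa using this.trans_eq (by rw [sub_neg_eq_add])
  have h4 : ‖T (TC x)‖ ≤ matSpectralNorm Δ * ‖TC x‖ := T.le_opNorm _
  have h5 : (1 - matSpectralNorm Δ) * ‖TC x‖ ≤ ‖x‖ := by
    rw [hx]; nlinarith [norm_nonneg (TC x)]
  calc ‖TC x‖ = (1 - matSpectralNorm Δ)⁻¹ * ((1 - matSpectralNorm Δ) * ‖TC x‖) := by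
        field_simp
    _ ≤ (1 - matSpectralNorm Δ)⁻¹ * ‖x‖ := mul_le_mul_of_nonneg_left h5 (by positivity)

lemma conj_mul_gen {d : ℕ} (u : Matrix (Fin d) (Fin d) ℝ) (h : star u * u = 1)
    (f g : Fin d → ℝ) :
    (u * diagonal f * star u) * (u * diagonal g * star u)
      = u * diagonal (fun i => f i * g i) * star u := by
  calc (u * diagonal f * star u) * (u * diagonal g * star u)
      = u * (diagonal f * ((star u * u) * diagonal g)) * star u := by
        simp only [Matrix.mul_assoc]
    _ = u * diagonal (fun i => f i * g i) * star u := by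
        rw [h, Matrix.one_mul, diagonal_mul_diagonal, Matrix.mul_assoc]

lemma conj_psd_gen {d : ℕ} (u : Matrix (Fin d) (Fin d) ℝ) (f : Fin d → ℝ) (hf : ∀ i, 0 ≤ f i) :
    (u * diagonal f * star u).PosSemidef := by
  have hdiag : (diagonal f).PosSemidef := posSemidef_diagonal_iff.mpr hf
  have := hdiag.mul_mul_conjTranspose_same u
  simpa [Matrix.mul_assoc, Matrix.star_eq_conjTranspose] using this

lemma conj_trace_gen {d : ℕ} (u : Matrix (Fin d) (Fin d) ℝ) (h : star u * u = 1)
    (f : Fin d → ℝ) : (u * diagonal f * star u).trace = ∑ i, f i := by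
  rw [Matrix.mul_assoc, Matrix.trace_mul_comm, Matrix.mul_assoc, h,
    Matrix.mul_one, Matrix.trace_diagonal]

lemma conj_transpose_symm_gen {d : ℕ} (u : Matrix (Fin d) (Fin d) ℝ) (f : Fin d → ℝ) :
    (u * diagonal f * star u)ᵀ = u * diagonal f * star u := by
  have hstar : ∀ (X : Matrix (Fin d) (Fin d) ℝ), star X = Xᵀ := fun X => rfl
  simp only [hstar, Matrix.transpose_mul, Matrix.diagonal_transpose, Matrix.transpose_transpose,
    Matrix.mul_assoc]

/-- Main spectral lemma packaged: facts about `R = hSlpsd.sqrt`. -/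
lemma spectral_package {d : ℕ} (S : Matrix (Fin d) (Fin d) ℝ) (hS : S.PosSemidef)
    (lam : ℝ) (hlam : 0 < lam) (Sl : Matrix (Fin d) (Fin d) ℝ)
    (hSl : Sl = S + lam • 1) (hSlpsd : Sl.PosSemidef) :
    ∃ B : Matrix (Fin d) (Fin d) ℝ,
      hSlpsd.sqrt⁻¹ * S * hSlpsd.sqrt⁻¹ = B ∧ Bᵀ = B ∧
      (B * B).trace = ∑ j, (hS.1.eigenvalues j / (hS.1.eigenvalues j + lam)) ^ 2 ∧
      hSlpsd.sqrt * hSlpsd.sqrt⁻¹ = 1 ∧ hSlpsd.sqrt⁻¹ * hSlpsd.sqrt = 1 := by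
  set u : Matrix (Fin d) (Fin d) ℝ := (hS.1.eigenvectorUnitary : Matrix (Fin d) (Fin d) ℝ)
    with hu
  set m : Fin d → ℝ := hS.1.eigenvalues with hm
  have hu1 : star u * u = 1 := Unitary.coe_star_mul_self hS.1.eigenvectorUnitary
  have hu2 : u * star u = 1 := Unitary.coe_mul_star_self hS.1.eigenvectorUnitary
  have hs : S = u * diagonal m * star u := by
    have := hS.1.spectral_theorem
    simpa using this
  have hmpos : ∀ i, 0 < m i + lam := fun i =>
    add_pos_of_nonneg_of_pos (hS.eigenvalues_nonneg i) hlam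
  set g : Fin d → ℝ := fun i => Real.sqrt (m i + lam) with hg
  have hgpos : ∀ i, 0 < g i := fun i => Real.sqrt_pos.mpr (hmpos i)
  set R : Matrix (Fin d) (Fin d) ℝ := u * diagonal g * star u with hR
  set W : Matrix (Fin d) (Fin d) ℝ := u * diagonal (fun i => (g i)⁻¹) * star u with hW
  have hRpsd : R.PosSemidef := conj_psd_gen u g (fun i => (hgpos i).le)
  have hRsq : R ^ 2 = Sl := by
    rw [pow_two, hR, conj_mul_gen u hu1, hSl]
    have h1 : (fun i => g i * g i) = fun i => m i + lam := by
      funext i; exact Real.mul_self_sqrt (hmpos i).le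
    rw [h1]
    have h2 : diagonal (fun i => m i + lam)
        = diagonal m + lam • (1 : Matrix (Fin d) (Fin d) ℝ) := by
      rw [Matrix.smul_one_eq_diagonal, ← Matrix.diagonal_add]
    rw [h2, Matrix.mul_add, Matrix.add_mul, ← hs]
    congr 1
    rw [Matrix.mul_smul, Matrix.smul_mul, Matrix.mul_one, hu2]
  have hsqrt : R = hSlpsd.sqrt := hRpsd.eq_sqrt_of_sq_eq hSlpsd hRsq
  have hRW : R * W = 1 := by
    rw [hR, hW, conj_mul_gen u hu1]
    have h1 : (fun i => g i * (g i)⁻¹) = fun _ => (1:ℝ) := by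
      funext i; exact mul_inv_cancel₀ (hgpos i).ne'
    rw [h1, Matrix.diagonal_one, Matrix.mul_one, hu2]
  have hRinv : R⁻¹ = W := Matrix.inv_eq_right_inv hRW
  have hWR : W * R = 1 := by
    rw [hW, hR, conj_mul_gen u hu1]
    have h1 : (fun i => (g i)⁻¹ * g i) = fun _ => (1:ℝ) := by
      funext i; exact inv_mul_cancel₀ (hgpos i).ne'
    rw [h1, Matrix.diagonal_one, Matrix.mul_one, hu2]
  refine ⟨u * diagonal (fun i => m i / (m i + lam)) * star u, ?_, ?_, ?_, ?_, ?_⟩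
  · rw [← hsqrt, hRinv, hW]
    conv_lhs => rw [hs]
    rw [conj_mul_gen u hu1, conj_mul_gen u hu1]
    have hfun : (fun i => (g i)⁻¹ * m i * (g i)⁻¹) = (fun i => m i / (m i + lam)) := by
      funext i
      rw [div_eq_mul_inv, ← Real.mul_self_sqrt (hmpos i).le, mul_inv]
      show (g i)⁻¹ * m i * (g i)⁻¹ = m i * ((g i)⁻¹ * (g i)⁻¹)
      ring
    rw [hfun]
  · exact conj_transpose_symm_gen u _
  · rw [conj_mul_gen u hu1, conj_trace_gen u hu1]
    exact Finset.sum_congr rfl fun i _ => (pow_two _).symm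
  · rw [← hsqrt, hRinv]; exact hRW
  · rw [← hsqrt, hRinv]; exact hWR

end Stmt10Aux

set_option maxHeartbeats 1000000 in
open Stmt10Aux in
/-- Trace bound for the ridge variance matrix:
`tr(M) ≤ (1/n)(1/(1-‖Δ‖)²)(d_{2,λ} + √(d_{2,λ})‖Δ‖_F)` where
`d_{2,λ} = Σⱼ (λⱼ(Σ)/(λⱼ(Σ)+λ))²` and `‖Δ‖_F` is the Frobenius norm. -/
theorem stmt10 {d n : ℕ} (hn : 0 < n)
    (S Sh : Matrix (Fin d) (Fin d) ℝ) (hS : S.PosSemidef) (hSh : Sh.PosSemidef)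
    (lam : ℝ) (hlam : 0 < lam)
    (Sl Shl : Matrix (Fin d) (Fin d) ℝ)
    (hSl : Sl = S + lam • 1) (hShl : Shl = Sh + lam • 1)
    (hSlpsd : Sl.PosSemidef)
    (Δ : Matrix (Fin d) (Fin d) ℝ)
    (hΔdef : Δ = hSlpsd.sqrt⁻¹ * (Sh - S) * hSlpsd.sqrt⁻¹)
    (hΔ : matSpectralNorm Δ < 1)
    (A : Matrix (Fin d) (Fin n) ℝ) (hA : (n : ℝ)⁻¹ • (A * Aᵀ) = Sh)
    (M : Matrix (Fin n) (Fin n) ℝ)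
    (hM : M = ((n : ℝ) ^ 2)⁻¹ • (Aᵀ * Shl⁻¹ * S * Shl⁻¹ * A))
    (d2 : ℝ)
    (hd2 : d2 = ∑ j, (hS.1.eigenvalues j / (hS.1.eigenvalues j + lam)) ^ 2) :
    M.trace ≤ (n : ℝ)⁻¹ * (1 / (1 - matSpectralNorm Δ)) ^ 2 *
      (d2 + Real.sqrt d2 * Real.sqrt (∑ i, ∑ j, Δ i j ^ 2)) := by
  obtain ⟨B, hBdef, hBsymm, hBtr, hRRi, hRiR⟩ := spectral_package S hS lam hlam Sl hSl hSlpsd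
  set R : Matrix (Fin d) (Fin d) ℝ := hSlpsd.sqrt with hRdef
  set C : Matrix (Fin d) (Fin d) ℝ := (1 + Δ)⁻¹ with hCdef
  have hnR : (0:ℝ) < n := Nat.cast_pos.mpr hn
  have hnne : (n:ℝ) ≠ 0 := hnR.ne'
  -- symmetries
  have hRsymm : Rᵀ = R := hSlpsd.posSemidef_sqrt.1
  have hRisymm : (R⁻¹)ᵀ = R⁻¹ := by rw [Matrix.transpose_nonsing_inv, hRsymm]
  have hΔsymm : Δᵀ = Δ := by
    have hShS : (Sh - S)ᵀ = Sh - S := by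
      rw [Matrix.transpose_sub]
      rw [show Shᵀ = Sh from hSh.1, show Sᵀ = S from hS.1]
    rw [hΔdef, Matrix.transpose_mul, Matrix.transpose_mul, hRisymm, hShS, Matrix.mul_assoc]
  have hCsymm : Cᵀ = C := by
    rw [hCdef, Matrix.transpose_nonsing_inv, Matrix.transpose_add, Matrix.transpose_one, hΔsymm]
  -- factorization of Shl
  have hShlfact : Shl = R * (1 + Δ) * R := by
    rw [Matrix.mul_add, Matrix.add_mul, Matrix.mul_one]
    have h1 : R * R = Sl := hSlpsd.sqrt_mul_self
    have h2 : R * Δ * R = Sh - S := by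
      rw [hΔdef]
      calc R * (R⁻¹ * (Sh - S) * R⁻¹) * R
          = (R * R⁻¹) * (Sh - S) * (R⁻¹ * R) := by simp only [Matrix.mul_assoc]
        _ = Sh - S := by rw [hRRi, hRiR, Matrix.one_mul, Matrix.mul_one]
    rw [h1, h2, hShl, hSl]
    abel
  have hShlinv : Shl⁻¹ = R⁻¹ * (C * R⁻¹) := by
    rw [hShlfact, Matrix.mul_inv_rev, Matrix.mul_inv_rev, hCdef]
  -- B + Δ
  have hBplus : B + Δ = R⁻¹ * Sh * R⁻¹ := by
    rw [← hBdef, hΔdef]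
    calc R⁻¹ * S * R⁻¹ + R⁻¹ * (Sh - S) * R⁻¹
        = R⁻¹ * (S + (Sh - S)) * R⁻¹ := by
          rw [Matrix.mul_add, Matrix.add_mul]
      _ = R⁻¹ * Sh * R⁻¹ := by rw [add_sub_cancel]
  -- trace reduction
  have hAAT : A * Aᵀ = (n:ℝ) • Sh := by
    rw [← hA, smul_smul, mul_inv_cancel₀ hnne, one_smul]
  have htrace : M.trace = (n:ℝ)⁻¹ * (C * B * C * (B + Δ)).trace := by
    rw [hM, Matrix.trace_smul, smul_eq_mul]
    have e1 : Aᵀ * Shl⁻¹ * S * Shl⁻¹ * A = Aᵀ * (Shl⁻¹ * S * Shl⁻¹ * A) := by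
      simp only [Matrix.mul_assoc]
    rw [e1, Matrix.trace_mul_comm]
    have e2 : Shl⁻¹ * S * Shl⁻¹ * A * Aᵀ = Shl⁻¹ * S * Shl⁻¹ * (A * Aᵀ) := by
      simp only [Matrix.mul_assoc]
    rw [e2, hAAT, Matrix.mul_smul, Matrix.trace_smul, smul_eq_mul]
    have e3 : (Shl⁻¹ * S * Shl⁻¹ * Sh).trace = (C * B * C * (B + Δ)).trace := by
      rw [hShlinv, hBplus, ← hBdef]
      have e4 : R⁻¹ * (C * R⁻¹) * S * (R⁻¹ * (C * R⁻¹)) * Sh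
          = R⁻¹ * (C * (R⁻¹ * S * R⁻¹) * C * (R⁻¹ * Sh)) := by
        simp only [Matrix.mul_assoc]
      rw [e4, Matrix.trace_mul_comm]
      have e5 : C * (R⁻¹ * S * R⁻¹) * C * (R⁻¹ * Sh) * R⁻¹
          = C * (R⁻¹ * S * R⁻¹) * C * (R⁻¹ * Sh * R⁻¹) := by
        simp only [Matrix.mul_assoc]
      rw [e5]
    rw [e3]
    field_simp
  rw [htrace]
  -- the scalar bound
  set s := matSpectralNorm Δ with hs
  have hpos : 0 < 1 - s := by rw [hs]; linarith
  have hCnorm : matSpectralNorm C ≤ (1 - s)⁻¹ := spectralNorm_inv_le Δ hΔ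
  have hCnn : (0:ℝ) ≤ matSpectralNorm C := norm_nonneg _
  have hd2nn : 0 ≤ d2 := by rw [hd2]; positivity
  -- fro B = sqrt d2
  have hfroB : fro B = Real.sqrt d2 := by
    have h1 : (B * B).trace = ∑ i, ∑ j, B i j ^ 2 := by
      rw [Matrix.trace]
      apply Finset.sum_congr rfl
      intro i _
      simp only [Matrix.diag_apply, Matrix.mul_apply]
      apply Finset.sum_congr rfl
      intro j _
      rw [pow_two]
      congr 1
      conv_rhs => rw [← hBsymm]
      rfl
    unfold fro
    rw [← h1, hBtr, ← hd2]
  have hfroBsq : fro B ^ 2 = d2 := by rw [hfroB, Real.sq_sqrt hd2nn]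
  -- decompose the trace
  have hsplit : (C * B * C * (B + Δ)).trace
      = ((C * B) * (C * B)).trace + ((C * B * C) * Δ).trace := by
    rw [Matrix.mul_add, Matrix.trace_add]
    congr 2
    simp only [Matrix.mul_assoc]
  set q := matSpectralNorm C with hq
  have hCB : fro (C * B) ≤ q * fro B := fro_mul_le C B
  have hBC : fro (B * C) = fro (C * B) := by
    rw [← fro_transpose (B * C), Matrix.transpose_mul, hCsymm, hBsymm]
  have hCBC : fro (C * B * C) ≤ q * (q * fro B) := by
    calc fro (C * B * C) = fro (C * (B * C)) := by rw [Matrix.mul_assoc]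
      _ ≤ q * fro (B * C) := fro_mul_le C (B * C)
      _ = q * fro (C * B) := by rw [hBC]
      _ ≤ q * (q * fro B) := mul_le_mul_of_nonneg_left hCB hCnn
  have htr1 : ((C * B) * (C * B)).trace ≤ q ^ 2 * d2 := by
    calc ((C * B) * (C * B)).trace ≤ fro (C * B) * fro (C * B) := trace_mul_le_fro _ _
      _ ≤ (q * fro B) * (q * fro B) :=
          mul_le_mul hCB hCB (fro_nonneg _) (mul_nonneg hCnn (fro_nonneg _))
      _ = q ^ 2 * fro B ^ 2 := by ring
      _ = q ^ 2 * d2 := by rw [hfroBsq]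
  have htr2 : ((C * B * C) * Δ).trace ≤ q ^ 2 * (Real.sqrt d2 * fro Δ) := by
    calc ((C * B * C) * Δ).trace ≤ fro (C * B * C) * fro Δ := trace_mul_le_fro _ _
      _ ≤ (q * (q * fro B)) * fro Δ :=
          mul_le_mul_of_nonneg_right hCBC (fro_nonneg _)
      _ = q ^ 2 * (fro B * fro Δ) := by ring
      _ = q ^ 2 * (Real.sqrt d2 * fro Δ) := by rw [hfroB]
  have hrest : 0 ≤ d2 + Real.sqrt d2 * fro Δ :=
    add_nonneg hd2nn (mul_nonneg (Real.sqrt_nonneg _) (fro_nonneg _))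
  have hq2 : q ^ 2 ≤ ((1 - s)⁻¹) ^ 2 := pow_le_pow_left₀ hCnn hCnorm 2
  have hmain : (C * B * C * (B + Δ)).trace
      ≤ (1 / (1 - s)) ^ 2 * (d2 + Real.sqrt d2 * fro Δ) := by
    rw [one_div]
    calc (C * B * C * (B + Δ)).trace
        = ((C * B) * (C * B)).trace + ((C * B * C) * Δ).trace := hsplit
      _ ≤ q ^ 2 * d2 + q ^ 2 * (Real.sqrt d2 * fro Δ) := add_le_add htr1 htr2
      _ = q ^ 2 * (d2 + Real.sqrt d2 * fro Δ) := by ring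
      _ ≤ ((1 - s)⁻¹) ^ 2 * (d2 + Real.sqrt d2 * fro Δ) :=
          mul_le_mul_of_nonneg_right hq2 hrest
  have hfroΔ : fro Δ = Real.sqrt (∑ i, ∑ j, Δ i j ^ 2) := rfl
  rw [mul_assoc ((n:ℝ)⁻¹) ((1 / (1 - s)) ^ 2)]
  apply mul_le_mul_of_nonneg_left _ (by positivity : (0:ℝ) ≤ (n:ℝ)⁻¹)
  rw [← hfroΔ]
  exact hmain
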